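/- Let S be a finitely generated cancellative commutative monoid over a field k of characteristic zero, and ∂ : k[S] → k[S] a homogeneous locally nilpotent derivation. Then ker ∂ is a finitely generated k-algebra. -/

import Mathlib

/-!
The monomials of `k[S]` killed by `D` have exponents forming a face `F` of `S`: writing
`ν(a) = max {n | Dⁿ a ≠ 0}`, Leibniz gives `D^{ν a + ν b} (a b) = C(ν a + ν b, ν a) Dᵛᵃ a Dᵛᵇ b`,
which is nonzero for monomials `a`, `b` in characteristic zero; so `D (χᵐ χᵐ') = 0` forces
`ν χᵐ = 0`.
Homogeneity and cancellation make `m ↦ exponent of D χᵐ` injective where `D χᵐ ≠ 0`, so `D`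
cannot cancel monomials against each other and `ker D` is spanned by the `χᵐ`, `m ∈ F`, i.e.
`ker D = k[F]`. A face of a finitely generated monoid is generated by the generators it contains.
-/

open Finset

namespace Derivation

variable {R A : Type*} [CommSemiring R] [CommSemiring A] [Algebra R A] (D : Derivation R A A)

def kerSubalgebra : Subalgebra R A where
  carrier := {a | D a = 0}
  mul_mem' ha hb := by simp_all [leibniz]
  add_mem' ha hb := by simp_all
  algebraMap_mem' := D.map_algebraMap

theorem iterate_apply_mul (n : ℕ) (a b : A) :
    (⇑D)^[n] (a * b) =
      ∑ ij ∈ antidiagonal n, n.choose ij.1 • ((⇑D)^[ij.1] a * (⇑D)^[ij.2] b) := by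
  induction n with
  | zero => simp
  | succ n ih =>
    rw [sum_antidiagonal_choose_succ_nsmul (M := A) (fun i j => (⇑D)^[i] a * (⇑D)^[j] b) n]
    simp only [Function.iterate_succ_apply', ih, map_sum, map_nsmul, leibniz, smul_eq_mul,
      smul_add, sum_add_distrib]
    congr 1
    refine sum_congr rfl fun ⟨i, j⟩ hij ↦ ?_
    rw [n.choose_symm_of_eq_add (HasAntidiagonal.mem_antidiagonal.1 hij).symm, mul_comm]

theorem iterate_apply_mul_of_iterate_succ_eq_zero {a b : A} {n p : ℕ}
    (ha : (⇑D)^[n + 1] a = 0) (hb : (⇑D)^[p + 1] b = 0) :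
    (⇑D)^[n + p] (a * b) = (n + p).choose n • ((⇑D)^[n] a * (⇑D)^[p] b) := by
  have hvanish : ∀ {x : A} {N i : ℕ}, (⇑D)^[N + 1] x = 0 → N < i → (⇑D)^[i] x = 0 := by
    intro x N i hx hi
    obtain ⟨j, rfl⟩ := Nat.exists_eq_add_of_le hi
    rw [add_comm, Function.iterate_add_apply, hx, iterate_map_zero]
  rw [iterate_apply_mul, sum_eq_single_of_mem (n, p) (HasAntidiagonal.mem_antidiagonal.2 rfl)]
  rintro ⟨i, j⟩ hij hne
  simp only [HasAntidiagonal.mem_antidiagonal, ne_eq, Prod.mk.injEq] at hij hne ⊢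
  rcases lt_or_gt_of_ne (show i ≠ n by omega) with hi | hi
  · rw [hvanish hb (by omega : p < j), mul_zero, smul_zero]
  · rw [hvanish ha hi, zero_mul, smul_zero]

end Derivation

theorem Function.exists_iterate_ne_zero_and_iterate_succ_eq_zero {M : Type*} [Zero M]
    (f : M → M) {x : M} (hx : x ≠ 0) {N : ℕ} (hN : f^[N] x = 0) :
    ∃ n, f^[n] x ≠ 0 ∧ f^[n + 1] x = 0 := by
  induction N with
  | zero => exact absurd hN hx
  | succ N ih => by_cases h : f^[N] x = 0; exacts [ih h, ⟨N, h, hN⟩]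

namespace AddSubmonoid

variable {S : Type*} [AddCommMonoid S]

def IsFace (F : AddSubmonoid S) : Prop := ∀ ⦃a b : S⦄, a + b ∈ F → a ∈ F

theorem IsFace.fg [AddMonoid.FG S] {F : AddSubmonoid S} (hF : F.IsFace) : F.FG := by
  classical
  obtain ⟨G, hG⟩ := AddMonoid.FG.fg_top (M := S)
  refine ⟨G.filter (· ∈ F), le_antisymm (closure_le.2 fun x hx ↦ (mem_filter.1 hx).2) ?_⟩
  intro m hm
  have hmG : m ∈ closure (G : Set S) := hG ▸ mem_top m
  induction hmG using closure_induction with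
  | mem x hx => exact subset_closure (mem_filter.2 ⟨hx, hm⟩)
  | zero => exact zero_mem _
  | add x y _ _ hx hy => exact add_mem (hx (hF hm)) (hy (hF (add_comm x y ▸ hm)))

end AddSubmonoid

namespace AddMonoidAlgebra

theorem adjoin_image_closure {R M : Type*} [CommSemiring R] [AddMonoid M] (s : Set M) :
    Algebra.adjoin R (of' R M '' AddSubmonoid.closure s) = Algebra.adjoin R (of' R M '' s) := by
  refine le_antisymm (Algebra.adjoin_le ?_)
    (Algebra.adjoin_mono (Set.image_mono AddSubmonoid.subset_closure))
  rintro _ ⟨m, hm, rfl⟩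
  induction hm using AddSubmonoid.closure_induction with
  | mem x hx => exact Algebra.subset_adjoin ⟨x, hx, rfl⟩
  | zero => exact Subalgebra.one_mem _
  | add x y _ _ hx hy =>
    simpa only [SetLike.mem_coe, of'_apply, single_mul_single, one_mul] using
      (Algebra.adjoin R _).mul_mem hx hy

variable {k S : Type*} [Field k] [AddCommMonoid S]
  (D : Derivation k (AddMonoidAlgebra k S) (AddMonoidAlgebra k S))

def kerExponents : AddSubmonoid S where
  carrier := {m | D (single m 1) = 0}
  zero_mem' := by simp [← one_def]
  add_mem' {a b} (ha : D (single a 1) = 0) (hb : D (single b 1) = 0) := by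
    change D (single (a + b) 1) = 0
    rw [← one_mul (1 : k), ← single_mul_single, Derivation.leibniz, ha, hb, smul_zero, smul_zero,
      add_zero]

variable {D} {φ : S → S} {c : S → k}

theorem derivation_single (hD : ∀ m, D (single m 1) = single (φ m) (c m)) (m : S) (a : k) :
    D (single m a) = single (φ m) (a * c m) := by
  rw [← mul_one a, ← smul_single', D.map_smul, hD, smul_single', mul_one]

theorem exists_iterate_derivation_single (hD : ∀ m, D (single m 1) = single (φ m) (c m))
    (n : ℕ) (m : S) (a : k) : ∃ p γ, (⇑D)^[n] (single m a) = single p γ := by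
  induction n generalizing m a with
  | zero => exact ⟨m, a, rfl⟩
  | succ n ih => simpa only [Function.iterate_succ_apply, derivation_single hD] using ih _ _

theorem isFace_kerExponents [CharZero k] (hD : ∀ m, D (single m 1) = single (φ m) (c m))
    (hlnd : ∀ f, ∃ n, (⇑D)^[n] f = 0) : (kerExponents D).IsFace := by
  intro m m' hmm'
  have single_ne_zero : ∀ x : S, single x (1 : k) ≠ 0 := fun x ↦ by simp
  obtain ⟨n, hn, hn1⟩ := (hlnd _).elim fun _ ↦
    Function.exists_iterate_ne_zero_and_iterate_succ_eq_zero D (single_ne_zero m)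
  obtain ⟨p, hp, hp1⟩ := (hlnd _).elim fun _ ↦
    Function.exists_iterate_ne_zero_and_iterate_succ_eq_zero D (single_ne_zero m')
  suffices n = 0 by subst this; exact hn1
  by_contra hn0
  obtain ⟨α, γ, hα⟩ := exists_iterate_derivation_single hD n m 1
  obtain ⟨β, δ, hβ⟩ := exists_iterate_derivation_single hD p m' 1
  have hγ : γ ≠ 0 := by rintro rfl; simp_all
  have hδ : δ ≠ 0 := by rintro rfl; simp_all
  have hprod : (⇑D)^[n + p] (single (m + m') 1) = 0 := by
    rw [show n + p = n + p - 1 + 1 by omega, Function.iterate_succ_apply,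
      show D (single (m + m') 1) = 0 from hmm', iterate_map_zero]
  rw [← one_mul (1 : k), ← single_mul_single, D.iterate_apply_mul_of_iterate_succ_eq_zero hn1 hp1,
    hα, hβ, single_mul_single] at hprod
  exact smul_ne_zero (Nat.choose_pos (Nat.le_add_right n p)).ne' (by simp [hγ, hδ]) hprod

theorem injOn_exponent [IsCancelAdd S] (hD : ∀ m, D (single m 1) = single (φ m) (c m)) :
    Set.InjOn φ {m | c m ≠ 0} := by
  intro m (hm : c m ≠ 0) m' (hm' : c m' ≠ 0) hφ
  by_contra hne
  -- By Leibniz, `D χ^{m+m'}` would be a sum of two distinct monomials.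
  have hsplit : single (φ (m + m')) (c (m + m')) =
      single (m + φ m') (c m') + single (m' + φ m) (c m) := by
    rw [← hD, ← one_mul (1 : k), ← single_mul_single, Derivation.leibniz, smul_eq_mul,
      smul_eq_mul, hD, hD, single_mul_single, single_mul_single, one_mul, one_mul]
  have hdist : m + φ m' ≠ m' + φ m := by
    rw [hφ]; exact fun h ↦ hne (add_right_cancel h)
  have h1 := congrArg (fun f ↦ f.coeff (m + φ m')) hsplit
  have h2 := congrArg (fun f ↦ f.coeff (m' + φ m)) hsplit
  simp only [coeff_add, coeff_single, Finsupp.add_apply, Finsupp.single_eq_same,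
    Finsupp.single_eq_of_ne hdist, Finsupp.single_eq_of_ne hdist.symm, add_zero, zero_add] at h1 h2
  have e1 := (Finsupp.single_apply_ne_zero.1 (h1 ▸ hm')).1
  have e2 := (Finsupp.single_apply_ne_zero.1 (h2 ▸ hm)).1
  exact hdist (e1.trans e2.symm)

theorem coeff_derivation_apply [IsCancelAdd S] (hD : ∀ m, D (single m 1) = single (φ m) (c m))
    (f : AddMonoidAlgebra k S) {m : S} (hm : c m ≠ 0) :
    (D f).coeff (φ m) = f.coeff m * c m := by
  classical
  conv_lhs => rw [← f.sum_coeff_single, Finsupp.sum, map_sum]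
  simp only [derivation_single hD, coeff_sum, Finset.sum_apply', coeff_single, Finsupp.single_apply]
  rw [Finset.sum_eq_single m]
  · simp
  · intro m' _ hne
    split_ifs with h
    · have : c m' = 0 := by_contra fun hc ↦ hne (injOn_exponent hD hc hm h)
      simp [this]
    · rfl
  · intro hm; simp [Finsupp.notMem_support_iff.1 hm]

theorem coe_support_subset_kerExponents [IsCancelAdd S]
    (hD : ∀ m, D (single m 1) = single (φ m) (c m)) {f : AddMonoidAlgebra k S} (hf : D f = 0) :
    ↑f.coeff.support ⊆ (kerExponents D : Set S) := by
  intro m hm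
  change D (single m 1) = 0
  rw [hD, single_eq_zero]
  by_contra hcm
  have hcoeff := coeff_derivation_apply hD f hcm
  rw [hf, coeff_zero, Finsupp.zero_apply] at hcoeff
  exact mul_ne_zero (Finsupp.mem_support_iff.1 hm) hcm hcoeff.symm

theorem kerSubalgebra_eq_adjoin [IsCancelAdd S] (hD : ∀ m, D (single m 1) = single (φ m) (c m)) :
    D.kerSubalgebra = Algebra.adjoin k (of' k S '' kerExponents D) :=
  le_antisymm
    (fun f hf ↦ Algebra.adjoin_mono (Set.image_mono (coe_support_subset_kerExponents hD hf))
      (mem_adjoin_support f))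
    (Algebra.adjoin_le (by rintro _ ⟨m, hm, rfl⟩; exact hm))

end AddMonoidAlgebra

/-- The kernel of a homogeneous locally nilpotent derivation of
the semigroup algebra of a finitely generated cancellative commutative monoid
is a finitely generated `k`-algebra. -/
theorem kernel_of_homogeneous_lnd_fg
    {k S : Type*} [Field k] [CharZero k] [AddCancelCommMonoid S] [AddMonoid.FG S]
    (D : Derivation k (AddMonoidAlgebra k S) (AddMonoidAlgebra k S))
    (hhom : ∀ m : S, ∃ (m' : S) (c : k),
      D (AddMonoidAlgebra.single m (1 : k)) = AddMonoidAlgebra.single m' c)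
    (hlnd : ∀ f : AddMonoidAlgebra k S, ∃ n : ℕ, (⇑D)^[n] f = 0) :
    ∃ A : Subalgebra k (AddMonoidAlgebra k S),
      (A : Set (AddMonoidAlgebra k S)) = {f | D f = 0} ∧ A.FG := by
  classical
  choose φ c hD using hhom
  obtain ⟨T, hT⟩ := (AddMonoidAlgebra.isFace_kerExponents hD hlnd).fg
  refine ⟨D.kerSubalgebra, rfl, T.image (AddMonoidAlgebra.of' k S), ?_⟩
  rw [AddMonoidAlgebra.kerSubalgebra_eq_adjoin hD, ← hT, AddMonoidAlgebra.adjoin_image_closure,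
    Finset.coe_image]
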